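/- arXiv:1805.09464 — 2 statements merged into one kernel-verified Lean document; each statement's English description precedes it below -/
import Mathlib

section
/- Let m, n ≥ 1 and τ > 0. For all real m×n matrices X and Y, the function g(t) = σ(X + t·Y, τ) is twice differentiable on ℝ and its second derivative satisfies 0 ≤ g''(t) ≤ |Y|₂²/τ for all t ∈ ℝ. -/
open Finset

/-- The logsumexp smoothing of the entrywise ℓ∞-norm. -/
noncomputable def logSumExp {m n : ℕ} (τ : ℝ) (X : Matrix (Fin m) (Fin n) ℝ) : ℝ :=
  τ * Real.log ((∑ i, ∑ j, (Real.exp (X i j / τ) + Real.exp (-X i j / τ))) / (2 * m * n))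

/-- Frobenius norm of a real m×n matrix. -/
noncomputable def frobNorm {m n : ℕ} (A : Matrix (Fin m) (Fin n) ℝ) : ℝ :=
  Real.sqrt (∑ i, ∑ j, (A i j) ^ 2)

/-!
Along the line `X + t • Y`, `σ(·, τ)` is, up to an additive constant, `τ` times the log-partition
function `t ↦ log ∑ₖ exp (aₖ + t bₖ)` over the `2mn` signed entries, with `aₖ = ±Xᵢⱼ / τ` and
`bₖ = ±Yᵢⱼ / τ`. Its first derivative is the mean of `b` under the normalized weights `exp (aₖ + t bₖ)`,
and its second derivative the variance of `b` under them. That variance is nonnegative by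
Cauchy–Schwarz and at most the mean of `b²`, hence at most `max bₖ² ≤ |Y|₂² / τ²`.
-/

open Real

namespace LogPartition

variable {ι : Type*} [Fintype ι] (a b : ι → ℝ)

noncomputable def expMoment (k : ℕ) (t : ℝ) : ℝ :=
  ∑ i, b i ^ k * exp (a i + t * b i)

noncomputable def expMean (t : ℝ) : ℝ :=
  expMoment a b 1 t / expMoment a b 0 t

noncomputable def expVariance (t : ℝ) : ℝ :=
  expMoment a b 2 t / expMoment a b 0 t - expMean a b t ^ 2

theorem hasDerivAt_expMoment (k : ℕ) (t : ℝ) :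
    HasDerivAt (expMoment a b k) (expMoment a b (k + 1) t) t := by
  unfold expMoment
  refine HasDerivAt.fun_sum fun i _ => ?_
  have hexp := (((hasDerivAt_id t).mul_const (b i)).const_add (a i)).exp.const_mul (b i ^ k)
  exact hexp.congr_deriv (by simp only [id]; ring)

theorem expMoment_zero_pos [Nonempty ι] (t : ℝ) : 0 < expMoment a b 0 t := by
  simpa only [expMoment, pow_zero, one_mul] using
    Finset.sum_pos (fun i _ => exp_pos (a i + t * b i)) univ_nonempty

theorem sq_expMoment_one_le (t : ℝ) :
    expMoment a b 1 t ^ 2 ≤ expMoment a b 0 t * expMoment a b 2 t := by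
  refine sum_sq_le_sum_mul_sum_of_sq_le_mul _ (fun i _ => by positivity)
    (fun i _ => by positivity) fun i _ => le_of_eq ?_
  ring_nf

theorem expMoment_two_le {C : ℝ} (hC : ∀ i, b i ^ 2 ≤ C) (t : ℝ) :
    expMoment a b 2 t ≤ C * expMoment a b 0 t := by
  simp only [expMoment, mul_sum, pow_zero, one_mul]
  exact sum_le_sum fun i _ => mul_le_mul_of_nonneg_right (hC i) (exp_pos _).le

theorem hasDerivAt_log_expMoment_zero [Nonempty ι] (t : ℝ) :
    HasDerivAt (fun s => log (expMoment a b 0 s)) (expMean a b t) t :=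
  (hasDerivAt_expMoment a b 0 t).log (expMoment_zero_pos a b t).ne'

theorem hasDerivAt_expMean [Nonempty ι] (t : ℝ) :
    HasDerivAt (expMean a b) (expVariance a b t) t := by
  have h0 := (expMoment_zero_pos a b t).ne'
  refine ((hasDerivAt_expMoment a b 1 t).div (hasDerivAt_expMoment a b 0 t) h0).congr_deriv ?_
  simp only [expVariance, expMean]
  field_simp

theorem expVariance_nonneg [Nonempty ι] (t : ℝ) : 0 ≤ expVariance a b t := by
  have h0 := expMoment_zero_pos a b t
  rw [expVariance, expMean, div_pow, sub_nonneg, div_le_div_iff₀ (by positivity) h0]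
  nlinarith [sq_expMoment_one_le a b t]

theorem expVariance_le [Nonempty ι] {C : ℝ} (hC : ∀ i, b i ^ 2 ≤ C) (t : ℝ) :
    expVariance a b t ≤ C := calc
  expVariance a b t ≤ expMoment a b 2 t / expMoment a b 0 t :=
    sub_le_self _ (sq_nonneg _)
  _ ≤ C := (div_le_iff₀ (expMoment_zero_pos a b t)).2 (expMoment_two_le a b hC t)

end LogPartition

open LogPartition

noncomputable def signedEntries {m n : ℕ} (A : Matrix (Fin m) (Fin n) ℝ) : Fin m × Fin n ⊕ Fin m × Fin n → ℝ :=
  Sum.elim (fun p => A p.1 p.2) (fun p => -A p.1 p.2)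

theorem sq_entry_le_frobNorm_sq {m n : ℕ} (A : Matrix (Fin m) (Fin n) ℝ) (i : Fin m) (j : Fin n) :
    A i j ^ 2 ≤ frobNorm A ^ 2 := by
  rw [frobNorm, sq_sqrt (by positivity)]
  calc A i j ^ 2 ≤ ∑ j', A i j' ^ 2 :=
        single_le_sum (f := fun j' => A i j' ^ 2) (fun _ _ => sq_nonneg _) (mem_univ j)
    _ ≤ ∑ i', ∑ j', A i' j' ^ 2 :=
        single_le_sum (f := fun i' => ∑ j', A i' j' ^ 2) (fun _ _ => by positivity) (mem_univ i)

theorem sq_signedEntries_le_frobNorm_sq {m n : ℕ} (A : Matrix (Fin m) (Fin n) ℝ)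
    (k : Fin m × Fin n ⊕ Fin m × Fin n) : signedEntries A k ^ 2 ≤ frobNorm A ^ 2 := by
  rcases k with ⟨i, j⟩ | ⟨i, j⟩
  · exact sq_entry_le_frobNorm_sq A i j
  · simpa only [signedEntries, Sum.elim_inr, neg_sq] using sq_entry_le_frobNorm_sq A i j

theorem logSumExp_add_smul {m n : ℕ} (τ : ℝ) (X Y : Matrix (Fin m) (Fin n) ℝ) (t : ℝ) :
    logSumExp τ (X + t • Y) =
      τ * log (expMoment (τ⁻¹ • signedEntries X) (τ⁻¹ • signedEntries Y) 0 t / (2 * m * n)) := by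
  simp only [logSumExp, expMoment, Fintype.sum_sum_type, Fintype.sum_prod_type, ← sum_add_distrib,
    signedEntries, Pi.smul_apply, Sum.elim_inl, Sum.elim_inr, Matrix.add_apply,
    Matrix.smul_apply, smul_eq_mul, pow_zero, one_mul]
  congr 3
  refine sum_congr rfl fun i _ => sum_congr rfl fun j _ => ?_
  congr 2 <;> ring

/-- For m, n ≥ 1 and τ > 0 and matrices X, Y, the function
`g(t) = σ(X + t·Y, τ)` is twice differentiable on ℝ and its second derivative
satisfies `0 ≤ g''(t) ≤ |Y|₂²/τ` for all t. -/
theorem logSumExp_second_deriv_bounds (m n : ℕ) (hm : 1 ≤ m) (hn : 1 ≤ n)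
    (τ : ℝ) (hτ : 0 < τ) (X Y : Matrix (Fin m) (Fin n) ℝ) :
    ∃ g' g'' : ℝ → ℝ,
      (∀ t : ℝ, HasDerivAt (fun s : ℝ => logSumExp τ (X + s • Y)) (g' t) t) ∧
      (∀ t : ℝ, HasDerivAt g' (g'' t) t) ∧
      (∀ t : ℝ, 0 ≤ g'' t ∧ g'' t ≤ (frobNorm Y) ^ 2 / τ) := by
  have : Nonempty (Fin m) := ⟨⟨0, hm⟩⟩
  have : Nonempty (Fin n) := ⟨⟨0, hn⟩⟩
  set a := τ⁻¹ • signedEntries X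
  set b := τ⁻¹ • signedEntries Y
  have hc : (0 : ℝ) < 2 * m * n := by positivity
  have hb : ∀ k, b k ^ 2 ≤ frobNorm Y ^ 2 / τ ^ 2 := fun k => by
    simpa only [b, Pi.smul_apply, smul_eq_mul, inv_mul_eq_div, div_pow] using
      div_le_div_of_nonneg_right (sq_signedEntries_le_frobNorm_sq Y k) (sq_nonneg τ)
  have hlse : (fun s : ℝ => logSumExp τ (X + s • Y)) =
      fun s => τ * (Real.log (expMoment a b 0 s) - Real.log (2 * m * n)) := funext fun s => by
    rw [logSumExp_add_smul, Real.log_div (expMoment_zero_pos a b s).ne' hc.ne']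
  refine ⟨fun t => τ * expMean a b t, fun t => τ * expVariance a b t, fun t => ?_,
    fun t => (hasDerivAt_expMean a b t).const_mul τ, fun t => ⟨?_, ?_⟩⟩
  · rw [hlse]
    exact ((hasDerivAt_log_expMoment_zero a b t).sub_const _).const_mul τ
  · exact mul_nonneg hτ.le (expVariance_nonneg a b t)
  · calc τ * expVariance a b t ≤ τ * (frobNorm Y ^ 2 / τ ^ 2) :=
          mul_le_mul_of_nonneg_left (expVariance_le a b hb t) hτ.le
      _ = frobNorm Y ^ 2 / τ := by field_simp
end

section
/- Let m, n ≥ 1 and τ > 0, and for a real m×n matrix X let G(X) be the m×n matrix with entries G(X)_{ij} = (e^{X_{ij}/τ} − e^{−X_{ij}/τ}) / (Σ_{k,l} (e^{X_{kl}/τ} + e^{−X_{kl}/τ})) (the gradient of the logsumexp function). Then G is Lipschitz with constant 1/τ in the Frobenius norm: for all real m×n matrices X, Y, |G(X) − G(Y)|₂ ≤ (1/τ)·|X − Y|₂. -/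
open Finset

/-- The gradient of the logsumexp function:
`G(X)_{ij} = (e^{X_{ij}/τ} − e^{−X_{ij}/τ}) / (Σ_{k,l} (e^{X_{kl}/τ} + e^{−X_{kl}/τ}))`. -/
noncomputable def logSumExpGrad {m n : ℕ} (τ : ℝ) (X : Matrix (Fin m) (Fin n) ℝ) :
    Matrix (Fin m) (Fin n) ℝ :=
  fun i j => (Real.exp (X i j / τ) - Real.exp (-X i j / τ)) /
    (∑ k, ∑ l, (Real.exp (X k l / τ) + Real.exp (-X k l / τ)))

/-!
Substituting `w = X / τ` and cancelling the factors `2`, the map becomes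
`g(w)_p = sinh w_p / ∑_q cosh w_q`, so it suffices to show that `g` is `1`-Lipschitz.
With `a_p = cosh w_p / ∑_q cosh w_q` and `c_p = tanh w_p`, the derivative of `g` in direction `v`
is `a ⊙ (v - c ⟨a ⊙ c, v⟩)`; since `a` is a sub-probability vector and `|c_p| ≤ 1`, this vector is
no longer than `v`. The mean value theorem along the segment from `y` to `x` then gives the bound.
-/

open Real

section Contraction

variable {ι : Type*} [Fintype ι]

theorem sum_sq_mul_sub_le_sum_sq {a c : ι → ℝ} (ha : ∀ p, 0 ≤ a p) (ha1 : ∑ p, a p ≤ 1)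
    (hc : ∀ p, c p ^ 2 ≤ 1) (v : ι → ℝ) :
    ∑ p, (a p * (v p - c p * ∑ q, a q * c q * v q)) ^ 2 ≤ ∑ p, v p ^ 2 := by
  set S := ∑ q, a q * c q * v q
  have ha_le_one : ∀ p, a p ≤ 1 := fun p =>
    (single_le_sum (fun q _ => ha q) (mem_univ p)).trans ha1
  have hac : ∑ p, a p * c p ^ 2 ≤ 1 :=
    (sum_le_sum fun p _ => mul_le_of_le_one_right (ha p) (hc p)).trans ha1
  calc ∑ p, (a p * (v p - c p * S)) ^ 2
      ≤ ∑ p, a p * (v p - c p * S) ^ 2 := sum_le_sum fun p _ => by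
        rw [mul_pow]
        exact mul_le_mul_of_nonneg_right (pow_le_of_le_one (ha p) (ha_le_one p) two_ne_zero)
          (sq_nonneg _)
    _ = ∑ p, (a p * v p ^ 2 - 2 * S * (a p * c p * v p) + S ^ 2 * (a p * c p ^ 2)) :=
        sum_congr rfl fun p _ => by ring
    _ = ∑ p, a p * v p ^ 2 - 2 * S * S + S ^ 2 * ∑ p, a p * c p ^ 2 := by
        rw [sum_add_distrib, sum_sub_distrib, ← mul_sum, ← mul_sum]
    _ ≤ ∑ p, a p * v p ^ 2 := by nlinarith [sq_nonneg S]
    _ ≤ ∑ p, v p ^ 2 := sum_le_sum fun p _ => mul_le_of_le_one_left (sq_nonneg _) (ha_le_one p)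

end Contraction

section SinhRatio

variable {ι : Type*} [Fintype ι]

noncomputable def sinhRatio (w : ι → ℝ) (p : ι) : ℝ :=
  sinh (w p) / ∑ q, cosh (w q)

noncomputable def coshWeight (w : ι → ℝ) (p : ι) : ℝ :=
  cosh (w p) / ∑ q, cosh (w q)

noncomputable def sinhRatioDeriv (w v : ι → ℝ) (p : ι) : ℝ :=
  coshWeight w p * (v p - tanh (w p) * ∑ q, coshWeight w q * tanh (w q) * v q)

theorem coshWeight_nonneg (w : ι → ℝ) (p : ι) : 0 ≤ coshWeight w p :=
  div_nonneg (cosh_pos _).le (sum_nonneg fun _ _ => (cosh_pos _).le)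

theorem sum_coshWeight_le_one (w : ι → ℝ) : ∑ p, coshWeight w p ≤ 1 := by
  simp only [coshWeight, ← sum_div]
  exact div_self_le_one _

theorem coshWeight_mul_tanh (w : ι → ℝ) (p : ι) :
    coshWeight w p * tanh (w p) = sinhRatio w p := by
  rw [coshWeight, sinhRatio, tanh_eq_sinh_div_cosh]
  field_simp [(cosh_pos (w p)).ne']

theorem sinhRatioDeriv_eq (w v : ι → ℝ) (p : ι) :
    sinhRatioDeriv w v p = coshWeight w p * v p - sinhRatio w p * ∑ q, sinhRatio w q * v q := by
  simp only [sinhRatioDeriv, ← coshWeight_mul_tanh]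
  ring

theorem sum_sq_sinhRatioDeriv_le (w v : ι → ℝ) :
    ∑ p, sinhRatioDeriv w v p ^ 2 ≤ ∑ p, v p ^ 2 :=
  sum_sq_mul_sub_le_sum_sq (coshWeight_nonneg w) (sum_coshWeight_le_one w)
    (fun _ => (tanh_sq_lt_one _).le) v

theorem HasDerivAt.sinhRatio {γ : ℝ → ι → ℝ} {γ' : ι → ℝ} {t : ℝ}
    (hγ : ∀ q, HasDerivAt (fun s => γ s q) (γ' q) t) (p : ι) :
    HasDerivAt (fun s => sinhRatio (γ s) p) (sinhRatioDeriv (γ t) γ' p) t := by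
  have hD : 0 < ∑ q, Real.cosh (γ t q) := sum_pos (fun _ _ => cosh_pos _) ⟨p, mem_univ p⟩
  refine ((hγ p).sinh.fun_div (HasDerivAt.fun_sum fun q _ => (hγ q).cosh) hD.ne').congr_deriv ?_
  rw [sinhRatioDeriv_eq]
  simp only [_root_.sinhRatio, coshWeight, div_mul_eq_mul_div, ← sum_div]
  field_simp

theorem sinhRatio_lipschitz (x y : ι → ℝ) :
    √(∑ p, (sinhRatio x p - sinhRatio y p) ^ 2) ≤ √(∑ p, (x p - y p) ^ 2) := by
  set u := fun p => sinhRatio x p - sinhRatio y p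
  set v := fun p => x p - y p
  set γ : ℝ → ι → ℝ := fun t p => y p + t * v p
  -- pairing with `u` reduces the vector-valued mean value inequality to the scalar one
  set φ : ℝ → ℝ := fun t => ∑ p, u p * sinhRatio (γ t) p
  have hφ : ∀ t, HasDerivAt φ (∑ p, u p * sinhRatioDeriv (γ t) v p) t := fun t =>
    HasDerivAt.fun_sum fun p _ => ((HasDerivAt.sinhRatio fun q =>
      ((hasDerivAt_mul_const (v q)).const_add (y q))) p).const_mul (u p)
  obtain ⟨t, -, ht⟩ := exists_hasDerivAt_eq_slope φ _ zero_lt_one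
    (fun t _ => (hφ t).continuousAt.continuousWithinAt) fun t _ => hφ t
  have hγ0 : γ 0 = y := funext fun p => by simp [γ]
  have hγ1 : γ 1 = x := funext fun p => by simp [γ, v]
  have hu : φ 1 - φ 0 = ∑ p, u p ^ 2 := by
    simp only [φ, hγ0, hγ1, ← sum_sub_distrib, u]
    exact sum_congr rfl fun p _ => by ring
  have key : √(∑ p, u p ^ 2) ^ 2 ≤ √(∑ p, u p ^ 2) * √(∑ p, v p ^ 2) := calc
    √(∑ p, u p ^ 2) ^ 2 = ∑ p, u p * sinhRatioDeriv (γ t) v p := by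
      rw [sq_sqrt (sum_nonneg fun _ _ => sq_nonneg _), ht, hu, sub_zero, div_one]
    _ ≤ √(∑ p, u p ^ 2) * √(∑ p, sinhRatioDeriv (γ t) v p ^ 2) :=
      Real.sum_mul_le_sqrt_mul_sqrt univ u _
    _ ≤ √(∑ p, u p ^ 2) * √(∑ p, v p ^ 2) :=
      mul_le_mul_of_nonneg_left (sqrt_le_sqrt (sum_sq_sinhRatioDeriv_le _ _)) (sqrt_nonneg _)
  nlinarith [sqrt_nonneg (∑ p, u p ^ 2), sqrt_nonneg (∑ p, v p ^ 2)]

end SinhRatio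

theorem frobNorm_eq_sqrt_sum {m n : ℕ} (A : Matrix (Fin m) (Fin n) ℝ) :
    frobNorm A = √(∑ p : Fin m × Fin n, A p.1 p.2 ^ 2) := by
  rw [frobNorm, Fintype.sum_prod_type]

theorem logSumExpGrad_apply {m n : ℕ} (τ : ℝ) (X : Matrix (Fin m) (Fin n) ℝ) (i : Fin m)
    (j : Fin n) : logSumExpGrad τ X i j = sinhRatio (fun p => X p.1 p.2 / τ) (i, j) := by
  simp only [logSumExpGrad, sinhRatio, sinh_eq, cosh_eq, neg_div, ← sum_div,
    Fintype.sum_prod_type]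
  field_simp

theorem logSumExp_grad_lipschitz_general (m n : ℕ) (τ : ℝ) (hτ : 0 < τ)
    (X Y : Matrix (Fin m) (Fin n) ℝ) :
    frobNorm (logSumExpGrad τ X - logSumExpGrad τ Y) ≤ (1 / τ) * frobNorm (X - Y) := by
  set x : Fin m × Fin n → ℝ := fun p => X p.1 p.2 / τ
  set y : Fin m × Fin n → ℝ := fun p => Y p.1 p.2 / τ
  calc frobNorm (logSumExpGrad τ X - logSumExpGrad τ Y)
      = √(∑ p, (sinhRatio x p - sinhRatio y p) ^ 2) := by
        simp only [frobNorm_eq_sqrt_sum, Matrix.sub_apply, logSumExpGrad_apply]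
        rfl
    _ ≤ √(∑ p, (x p - y p) ^ 2) := sinhRatio_lipschitz x y
    _ = √((1 / τ) ^ 2 * ∑ p : Fin m × Fin n, (X p.1 p.2 - Y p.1 p.2) ^ 2) := by
        rw [mul_sum]
        exact congrArg _ (sum_congr rfl fun p _ => by simp only [x, y]; ring)
    _ = (1 / τ) * frobNorm (X - Y) := by
        rw [sqrt_mul (sq_nonneg _), sqrt_sq (by positivity), frobNorm_eq_sqrt_sum]
        rfl

/-- For m, n ≥ 1 and τ > 0, the gradient of the logsumexp
function is Lipschitz with constant 1/τ in the Frobenius norm. -/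
theorem logSumExp_grad_lipschitz (m n : ℕ) (hm : 1 ≤ m) (hn : 1 ≤ n) (τ : ℝ) (hτ : 0 < τ)
    (X Y : Matrix (Fin m) (Fin n) ℝ) :
    frobNorm (logSumExpGrad τ X - logSumExpGrad τ Y) ≤ (1 / τ) * frobNorm (X - Y) :=
  logSumExp_grad_lipschitz_general m n τ hτ X Y
end
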